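/- arXiv:2302.08988 — 11 statements merged into one kernel-verified Lean document; each statement's English description precedes it below -/
import Mathlib

section
/- Let G be a subgroup of the monoid ℕ^ℕ under composition, f ∈ G, x ∈ ℕ, and x' ∈ im(f) with f(x) = f(x'). Then for every g ∈ G, g(x) = f(x) if and only if g(x') = f(x'). -/
/-!
Let `h` be the inverse of `f` in `G`, so `h ∘ f = e`. The identity `e` of `G` fixes every point of
`im f`, because `e ∘ f = f`; hence `e x = h (f x) = h (f x') = e x' = x'`. Every `g ∈ G` satisfies
`g = g ∘ e`, so `g x = g (e x) = g x'`, while `f x = f x'` by hypothesis.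
-/

variable {α β : Type*}

theorem apply_eq_self_of_comp_eq_of_mem_range {e : α → α} {f : β → α} (hef : e ∘ f = f)
    {x : α} (hx : x ∈ Set.range f) : e x = x := by
  obtain ⟨y, rfl⟩ := hx
  exact congrFun hef y

theorem apply_eq_of_apply_eq_of_mem_range {e f h : α → α} (hhf : h ∘ f = e) (hef : e ∘ f = f)
    {x x' : α} (hx' : x' ∈ Set.range f) (hfx : f x = f x') : e x = x' :=
  calc e x = h (f x) := (congrFun hhf x).symm
    _ = h (f x') := by rw [hfx]
    _ = e x' := congrFun hhf x'
    _ = x' := apply_eq_self_of_comp_eq_of_mem_range hef hx'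

theorem subgroup_agreement_transfer_general
    (G : Set (ℕ → ℕ))
    (e : ℕ → ℕ)
    (hid : ∀ g ∈ G, g ∘ e = g ∧ e ∘ g = g)
    (hinv : ∀ g ∈ G, ∃ h ∈ G, h ∘ g = e ∧ g ∘ h = e)
    (f : ℕ → ℕ) (hf : f ∈ G) (x x' : ℕ) (hx' : x' ∈ Set.range f)
    (hfx : f x = f x') :
    ∀ g ∈ G, (g x = f x ↔ g x' = f x') := by
  intro g hg
  obtain ⟨h, -, hhf, -⟩ := hinv f hf
  have hex : e x = x' := apply_eq_of_apply_eq_of_mem_range hhf (hid f hf).2 hx' hfx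
  have hgx : g x = g x' := by
    rw [← hex]
    exact (congrFun (hid g hg).1 x).symm
  rw [hgx, hfx]

/-- Let `G` be a subgroup of the monoid `ℕ^ℕ` under composition, `f ∈ G`,
`x ∈ ℕ`, and `x' ∈ im(f)` with `f x = f x'`. Then for every `g ∈ G`,
`g x = f x` iff `g x' = f x'`. -/
theorem subgroup_agreement_transfer
    (G : Set (ℕ → ℕ))
    (hmul : ∀ f ∈ G, ∀ g ∈ G, g ∘ f ∈ G)
    (e : ℕ → ℕ) (heG : e ∈ G)
    (hid : ∀ g ∈ G, g ∘ e = g ∧ e ∘ g = g)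
    (hinv : ∀ g ∈ G, ∃ h ∈ G, h ∘ g = e ∧ g ∘ h = e)
    (f : ℕ → ℕ) (hf : f ∈ G) (x x' : ℕ) (hx' : x' ∈ Set.range f)
    (hfx : f x = f x') :
    ∀ g ∈ G, (g x = f x ↔ g x' = f x') :=
  subgroup_agreement_transfer_general G e hid hinv f hf x x' hx' hfx
end

section
/- Every topological group that embeds topologically into ℕ^ℕ (with the product topology, as a topological semigroup under composition) also embeds topologically into the symmetric group S_ℕ with the topology of pointwise convergence. -/
open Topology

/-!
Let `φ : G → (ℕ → ℕ)` be the embedding, an antihomomorphism for composition. Then `e = φ 1` is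
an idempotent and every `φ g` maps into its image `X` and satisfies `φ g ∘ e = φ g`, so the
restrictions of the `φ g` to `X` form a group of permutations of `X`. Extending them by the
identity off `X` gives permutations of `ℕ`; `φ g` is recovered from its extension by
precomposing with `e`, which is continuous, so the extension is again an embedding.
Inverting turns the antihomomorphism into a homomorphism.
-/

section ExtendIdOffRange

variable {G α : Type*} [Group G] {φ : G → α → α}

open Classical in
noncomputable def extendIdOffRange (φ : G → α → α) (g : G) : α → α :=
  (Set.range (φ 1)).piecewise (φ g) id

lemma extendIdOffRange_of_mem {x : α} (hx : x ∈ Set.range (φ 1)) (g : G) :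
    extendIdOffRange φ g x = φ g x := by
  classical
  exact Set.piecewise_eq_of_mem _ _ _ hx

lemma extendIdOffRange_of_notMem {x : α} (hx : x ∉ Set.range (φ 1)) (g : G) :
    extendIdOffRange φ g x = x := by
  classical
  exact Set.piecewise_eq_of_notMem _ _ _ hx

lemma one_apply_apply_of_antihom (hφ : ∀ a b, φ (a * b) = φ b ∘ φ a) (g : G) (x : α) :
    φ 1 (φ g x) = φ g x := by
  simpa using (congrFun (hφ g 1) x).symm

lemma apply_one_apply_of_antihom (hφ : ∀ a b, φ (a * b) = φ b ∘ φ a) (g : G) (x : α) :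
    φ g (φ 1 x) = φ g x := by
  simpa using (congrFun (hφ 1 g) x).symm

lemma extendIdOffRange_apply_one (hφ : ∀ a b, φ (a * b) = φ b ∘ φ a) (g : G) (x : α) :
    extendIdOffRange φ g (φ 1 x) = φ g x := by
  rw [extendIdOffRange_of_mem ⟨x, rfl⟩, apply_one_apply_of_antihom hφ]

lemma extendIdOffRange_mul (hφ : ∀ a b, φ (a * b) = φ b ∘ φ a) (a b : G) (x : α) :
    extendIdOffRange φ (a * b) x = extendIdOffRange φ b (extendIdOffRange φ a x) := by
  by_cases hx : x ∈ Set.range (φ 1)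
  · have hax : φ a x ∈ Set.range (φ 1) := ⟨φ a x, one_apply_apply_of_antihom hφ a x⟩
    rw [extendIdOffRange_of_mem hx, extendIdOffRange_of_mem hx, extendIdOffRange_of_mem hax,
      hφ, Function.comp_apply]
  · simp only [extendIdOffRange_of_notMem hx]

lemma extendIdOffRange_one (hφ : ∀ a b, φ (a * b) = φ b ∘ φ a) (x : α) :
    extendIdOffRange φ 1 x = x := by
  by_cases hx : x ∈ Set.range (φ 1)
  · obtain ⟨y, rfl⟩ := hx
    exact extendIdOffRange_apply_one hφ 1 y
  · exact extendIdOffRange_of_notMem hx 1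

noncomputable def antihomToPerm (hφ : ∀ a b, φ (a * b) = φ b ∘ φ a) : G →* Equiv.Perm α where
  toFun g :=
    { toFun := extendIdOffRange φ g⁻¹
      invFun := extendIdOffRange φ g
      left_inv x := by rw [← extendIdOffRange_mul hφ, inv_mul_cancel, extendIdOffRange_one hφ]
      right_inv x := by rw [← extendIdOffRange_mul hφ, mul_inv_cancel, extendIdOffRange_one hφ] }
  map_one' := Equiv.ext fun x => by simp only [inv_one]; exact extendIdOffRange_one hφ x
  map_mul' a b := Equiv.ext fun x => by
    simp only [mul_inv_rev]; exact extendIdOffRange_mul hφ b⁻¹ a⁻¹ x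

variable [TopologicalSpace G] [TopologicalSpace α]

lemma continuous_extendIdOffRange (hc : Continuous φ) : Continuous (extendIdOffRange φ) := by
  refine continuous_pi fun x => ?_
  by_cases hx : x ∈ Set.range (φ 1)
  · exact ((continuous_apply x).comp hc).congr fun g => (extendIdOffRange_of_mem hx g).symm
  · exact continuous_const.congr fun g => (extendIdOffRange_of_notMem hx g).symm

lemma isEmbedding_extendIdOffRange (hφ : ∀ a b, φ (a * b) = φ b ∘ φ a)
    (he : IsEmbedding φ) : IsEmbedding (extendIdOffRange φ) := by
  have hcomp : (fun (f : α → α) x => f (φ 1 x)) ∘ extendIdOffRange φ = φ := by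
    funext g x
    exact extendIdOffRange_apply_one hφ g x
  refine .of_comp (continuous_extendIdOffRange he.continuous)
    (continuous_pi fun x => continuous_apply (φ 1 x)) ?_
  rwa [hcomp]

end ExtendIdOffRange

/-- Every topological group that embeds topologically into `ℕ^ℕ` (with the
product topology, as a topological semigroup under left-to-right composition)
also embeds topologically into the symmetric group `S_ℕ` with the topology of
pointwise convergence (i.e. the subspace topology induced from `ℕ^ℕ`). -/
theorem topological_group_embeds_in_symmetric_group_of_embeds_in_NN
    (G : Type*) [Group G] [TopologicalSpace G] [IsTopologicalGroup G]
    (h : ∃ φ : G → (ℕ → ℕ), (∀ a b : G, φ (a * b) = φ b ∘ φ a) ∧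
      Topology.IsEmbedding φ) :
    ∃ ψ : G →* Equiv.Perm ℕ, Function.Injective ψ ∧
      Topology.IsEmbedding (fun g : G => ((ψ g : Equiv.Perm ℕ) : ℕ → ℕ)) := by
  obtain ⟨φ, hφ, he⟩ := h
  have hemb : IsEmbedding fun g => ⇑(antihomToPerm hφ g) :=
    (isEmbedding_extendIdOffRange hφ he).comp (Homeomorph.inv G).isEmbedding
  exact ⟨antihomToPerm hφ, fun a b hab => hemb.injective (congrArg DFunLike.coe hab), hemb⟩
end

section
/- Every quotient of a commutative inverse monoid by a Vagner-Preston congruence is either a group or a group with a zero element adjoined. -/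
/-!
Taking `t = s` in the Vagner-Preston condition shows that every class `[s]` either has the
inverse `[s⁻¹]` or absorbs everything, `[s][t] = [s]`. In a commutative monoid an absorbing
element is a zero, and there is at most one. So either all elements of the quotient are units,
or there is a zero `z ≠ 1` and all other elements are units; a zero `z ≠ 1` is never a unit,
hence the units form a group off `z`.
-/

section AbsorbingOrUnit

variable {M : Type*} [CommMonoid M]

theorem eq_of_forall_mul_eq_self {z z' : M} (hz : ∀ y, z * y = z) (hz' : ∀ y, z' * y = z') :
    z = z' :=
  calc z = z * z' := (hz z').symm
    _ = z' * z := mul_comm z z'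
    _ = z' := hz' z

theorem not_isUnit_of_forall_mul_eq_self {z : M} (hz : ∀ y, z * y = z) (hz1 : z ≠ 1) :
    ¬IsUnit z := by
  rintro ⟨u, rfl⟩
  exact hz1 ((hz _).symm.trans u.mul_inv)

theorem isUnit_of_ne_of_forall_mul_eq_self (h : ∀ x : M, IsUnit x ∨ ∀ y, x * y = x) {z x : M}
    (hz : ∀ y, z * y = z) (hx : x ≠ z) : IsUnit x :=
  (h x).resolve_right fun hx' => hx (eq_of_forall_mul_eq_self hx' hz)

theorem forall_exists_mul_eq_one_or_exists_zero_of_isUnit_or_absorbing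
    (h : ∀ x : M, IsUnit x ∨ ∀ y, x * y = x) :
    (∀ x : M, ∃ y, x * y = 1) ∨
    (∃ z : M, z ≠ 1 ∧ (∀ x, z * x = z ∧ x * z = z) ∧
      (∀ x y : M, x ≠ z → y ≠ z → x * y ≠ z) ∧
      (∀ x : M, x ≠ z → ∃ y, y ≠ z ∧ x * y = 1)) := by
  by_cases hzero : ∃ z : M, z ≠ 1 ∧ ∀ y, z * y = z
  · obtain ⟨z, hz1, hz⟩ := hzero
    have hunit (x : M) (hx : x ≠ z) : IsUnit x := isUnit_of_ne_of_forall_mul_eq_self h hz hx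
    have hne (x : M) (hx : IsUnit x) : x ≠ z := by
      rintro rfl
      exact not_isUnit_of_forall_mul_eq_self hz hz1 hx
    refine Or.inr ⟨z, hz1, fun x => ⟨hz x, mul_comm x z ▸ hz x⟩,
      fun x y hx hy => hne _ ((hunit x hx).mul (hunit y hy)), fun x hx => ?_⟩
    obtain ⟨u, rfl⟩ := hunit x hx
    exact ⟨↑u⁻¹, hne _ u⁻¹.isUnit, u.mul_inv⟩
  · refine Or.inl fun x => ?_
    rcases h x with hx | hx
    · exact isUnit_iff_exists_inv.mp hx
    · obtain rfl : x = 1 := by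
        by_contra hx1
        exact hzero ⟨x, hx1, hx⟩
      exact ⟨1, one_mul 1⟩

end AbsorbingOrUnit

namespace Con

variable {S : Type*} [CommMonoid S]

def IsVagnerPreston (inv : S → S) (ρ : Con S) : Prop :=
  ∀ s : S, (∀ t : S, ρ s t → ρ 1 (t * inv t)) ∨ ∀ t : S, ρ (s * t) s

theorem IsVagnerPreston.isUnit_or_forall_mul_eq_self {inv : S → S} {ρ : Con S}
    (hρ : IsVagnerPreston inv ρ) (x : ρ.Quotient) : IsUnit x ∨ ∀ y, x * y = x := by
  induction x using Con.induction_on with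
  | H a =>
    rcases hρ a with hinv | habs
    · refine Or.inl (IsUnit.of_mul_eq_one (inv a : ρ.Quotient) ?_)
      rw [← coe_mul, ← coe_one, Con.eq]
      exact ρ.symm (hinv a (ρ.refl a))
    · refine Or.inr fun y => ?_
      induction y using Con.induction_on with
      | H b => exact Con.eq ρ |>.mpr (habs b)

end Con

theorem quotient_of_comm_inverse_monoid_by_VP_congruence_general
    (S : Type*) [CommMonoid S] (inv : S → S)
    (ρ : Con S)
    (hVP : ∀ s : S, (∀ t : S, ρ s t → ρ 1 (t * inv t)) ∨ (∀ t : S, ρ (s * t) s)) :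
    (∀ x : ρ.Quotient, ∃ y : ρ.Quotient, x * y = 1) ∨
    (∃ z : ρ.Quotient, z ≠ 1 ∧ (∀ x : ρ.Quotient, z * x = z ∧ x * z = z) ∧
      (∀ x y : ρ.Quotient, x ≠ z → y ≠ z → x * y ≠ z) ∧
      (∀ x : ρ.Quotient, x ≠ z → ∃ y : ρ.Quotient, y ≠ z ∧ x * y = 1)) :=
  forall_exists_mul_eq_one_or_exists_zero_of_isUnit_or_absorbing
    (Con.IsVagnerPreston.isUnit_or_forall_mul_eq_self (inv := inv) hVP)

/-- Every quotient of a commutative inverse monoid by a Vagner-Preston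
congruence is a group or a group with zero adjoined.  Here `S` is a commutative
monoid with an inverse operation `inv` making it an inverse semigroup, and a
congruence `ρ` is Vagner-Preston if for every `s` either every `t ∈ [s]_ρ`
satisfies `1 ∈ [t t⁻¹]_ρ`, or `[s t]_ρ = [s]_ρ` for all `t`.  The quotient is a
group (every element invertible), or a group with zero adjoined (there is an
absorbing element `z ≠ 1` whose complement is a group under multiplication). -/
theorem quotient_of_comm_inverse_monoid_by_VP_congruence
    (S : Type*) [CommMonoid S] (inv : S → S)
    (hreg : ∀ x : S, x * inv x * x = x ∧ inv x * x * inv x = inv x)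
    (huniq : ∀ x y : S, x * y * x = x → y * x * y = y → y = inv x)
    (ρ : Con S)
    (hVP : ∀ s : S, (∀ t : S, ρ s t → ρ 1 (t * inv t)) ∨ (∀ t : S, ρ (s * t) s)) :
    (∀ x : ρ.Quotient, ∃ y : ρ.Quotient, x * y = 1) ∨
    (∃ z : ρ.Quotient, z ≠ 1 ∧ (∀ x : ρ.Quotient, z * x = z ∧ x * z = z) ∧
      (∀ x y : ρ.Quotient, x ≠ z → y ≠ z → x * y ≠ z) ∧
      (∀ x : ρ.Quotient, x ≠ z → ∃ y : ρ.Quotient, y ≠ z ∧ x * y = 1)) :=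
  quotient_of_comm_inverse_monoid_by_VP_congruence_general S inv ρ hVP
end

section
/- Let X be a semilattice endowed with a T1 topology such that all left translations x ↦ ax are continuous, and suppose the underlying topological space is scattered. Then X is a U₂-semilattice: for every open set U and every x ∈ U there exist y ∈ U and a clopen ideal I ⊆ X such that x ∈ X \ I ⊆ ↑y. -/
/-!
Let `A = xX ∩ U` and let `y` be an isolated point of `A`, witnessed by an open `V` with
`V ∩ A = {y}`. Every `zy` lies in `xX`, so `zy ∈ V ∩ U` forces `zy = y`; hence the upper cone
`↑y` is the preimage of `V ∩ U` under `z ↦ zy` and is open. It is also the preimage of the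
closed point `{y}`, so it is clopen, and its complement is the required ideal.
-/

open Set

def upperCone {X : Type*} [Mul X] (y : X) : Set X := {z | y * z = y}

section Semigroup

variable {X : Type*} [Semigroup X]

theorem mem_upperCone_of_mul_mem (hidem : ∀ x : X, x * x = x) {y z i : X}
    (h : z * i ∈ upperCone y) : i ∈ upperCone y :=
  calc y * i = y * (z * i) * i := by rw [h]
    _ = y * (z * i) := by rw [mul_assoc, mul_assoc, hidem]
    _ = y := h

theorem mul_mem_compl_upperCone (hidem : ∀ x : X, x * x = x) {y i : X}
    (hi : i ∈ (upperCone y)ᶜ) (z : X) : z * i ∈ (upperCone y)ᶜ :=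
  fun h => hi (mem_upperCone_of_mul_mem hidem h)

end Semigroup

section CommSemigroup

variable {X : Type*} [CommSemigroup X]

theorem mem_upperCone_of_mem_range_mul (hidem : ∀ x : X, x * x = x) {x y : X}
    (hy : y ∈ range (x * ·)) : x ∈ upperCone y := by
  obtain ⟨t, rfl⟩ := hy
  change x * t * x = x * t
  rw [mul_right_comm, hidem]

theorem upperCone_eq_preimage_singleton (y : X) :
    upperCone y = (· * y) ⁻¹' {y} := by
  ext z
  change y * z = y ↔ z * y = y
  rw [mul_comm]

variable [TopologicalSpace X]

theorem isClosed_upperCone [T1Space X] {y : X} (hcont : Continuous (· * y)) :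
    IsClosed (upperCone y) := by
  rw [upperCone_eq_preimage_singleton]
  exact isClosed_singleton.preimage hcont

theorem isOpen_upperCone {y : X} {W : Set X}
    (hW : IsOpen W) (hyW : y ∈ W) (hiso : ∀ z, z * y ∈ W → z * y = y)
    (hcont : Continuous (· * y)) : IsOpen (upperCone y) := by
  have hpre : upperCone y = (· * y) ⁻¹' W := by
    rw [upperCone_eq_preimage_singleton]
    ext z
    refine ⟨fun hz => ?_, hiso z⟩
    rw [mem_preimage, (mem_singleton_iff.1 hz : z * y = y)]
    exact hyW
  rw [hpre]
  exact hW.preimage hcont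

end CommSemigroup

/-- Let `X` be a semilattice (commutative idempotent semigroup) endowed with a
`T1` topology for which all translations `x ↦ x * a` are continuous, and
suppose the space is scattered.  Then `X` is a `U₂`-semilattice: for every open
set `U` and every `x ∈ U` there exist `y ∈ U` and a clopen ideal `I ⊆ X` such
that `x ∈ X \ I ⊆ ↑y`, where `↑y = {z | y * z = y}` is the upper cone of `y`. -/
theorem scattered_T1_semitopological_semilattice_is_U2
    (X : Type*) [Semigroup X] [TopologicalSpace X] [T1Space X]
    (hcomm : ∀ x y : X, x * y = y * x)
    (hidem : ∀ x : X, x * x = x)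
    (hcont : ∀ a : X, Continuous fun x : X => x * a)
    (hscat : ∀ A : Set X, A.Nonempty →
      ∃ x ∈ A, ∃ U : Set X, IsOpen U ∧ U ∩ A = {x}) :
    ∀ U : Set X, IsOpen U → ∀ x ∈ U, ∃ y ∈ U, ∃ I : Set X,
      IsClopen I ∧ (∀ i ∈ I, ∀ z : X, z * i ∈ I) ∧
      x ∉ I ∧ ∀ z ∉ I, y * z = y := by
  let _ : CommSemigroup X := { ‹Semigroup X› with mul_comm := hcomm }
  intro U hU x hx
  obtain ⟨y, ⟨hyx, hyU⟩, V, hV, hVA⟩ := hscat (range (x * ·) ∩ U) ⟨x, ⟨x, hidem x⟩, hx⟩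
  have hiso : ∀ z, z * y ∈ V ∩ U → z * y = y := by
    obtain ⟨t, rfl⟩ := hyx
    intro z ⟨hzV, hzU⟩
    have hmem : z * (x * t) ∈ V ∩ (range (x * ·) ∩ U) :=
      ⟨hzV, ⟨t * z, by rw [mul_comm z, mul_assoc]⟩, hzU⟩
    rwa [hVA] at hmem
  have hclopen : IsClopen (upperCone y) :=
    ⟨isClosed_upperCone (hcont y),
      isOpen_upperCone (hV.inter hU) ⟨(hVA.ge rfl).1, hyU⟩ hiso (hcont y)⟩
  exact ⟨y, hyU, (upperCone y)ᶜ, hclopen.compl, fun i hi => mul_mem_compl_upperCone hidem hi,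
    not_not.2 (mem_upperCone_of_mem_range_mul hidem hyx), fun z hz => not_not.1 hz⟩
end

section
/- A scattered topological space is Polish if and only if it is regular and second-countable. -/
/-!
A scattered space has empty perfect kernel, so every point `x` has a Cantor–Bendixson rank `r x`:
it lies in the `r x`-th iterated derived set of the space and is isolated there, hence near `x`
no other point has rank `≥ r x`. Inside the completion of a separable metric space with such a
rank, the space is the Gδ set `⋂ₙ ⋃ₓ B(x, min (εₓ) (1 / (n + 1)))`: a point of this intersection
is the limit of the centres `xₙ`, and once the `xₙ` enter the isolating ball of a centre of minimal
rank they all coincide with it. A Gδ subset of a Polish space is Polish.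
-/

open Set Filter Topology Metric CantorBendixson

universe u

namespace CantorBendixson

variable {X : Type u} [TopologicalSpace X]

theorem exists_mem_iteratedDerivedSet_notMem_succ {s : Set X} {x : X} (hxs : x ∈ s)
    (hx : x ∉ perfectKernel s) : ∃ a, x ∈ sᵈ[a] ∧ x ∉ sᵈ[a + 1] := by
  by_contra! h
  refine hx (mem_iInter.2 fun a => ?_)
  induction a using Ordinal.limitRecOn with
  | zero => simpa
  | add_one a ha => exact h a ha
  | limit a ha ih =>
    rw [iteratedDerivedSet_limit ha]
    exact mem_iInter.2 fun b => ih b b.2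

theorem perfectKernel_eq_empty_of_forall_exists_isolated
    (hscat : ∀ A : Set X, A.Nonempty → ∃ x ∈ A, ∃ U : Set X, IsOpen U ∧ U ∩ A = {x})
    (s : Set X) : perfectKernel s = ∅ := by
  obtain ⟨a, ha⟩ := iteratedDerivedSet_mem_fixedPoints s
  have hpre : Preperfect (perfectKernel s) := by
    rw [perfectKernel_eq_iteratedDerivedSet_of_mem_fixedPoints ha,
      preperfect_iff_eq_relDerivedSet]
    exact ha.symm
  by_contra hne
  obtain ⟨x, hx, U, hU, hUx⟩ := hscat _ (nonempty_iff_ne_empty.2 hne)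
  have hxU : x ∈ U := (hUx.symm ▸ mem_singleton x : x ∈ U ∩ _).1
  obtain ⟨y, hyUK, hyx⟩ := accPt_iff_nhds.1 (hpre x hx) U (hU.mem_nhds hxU)
  exact hyx (hUx ▸ hyUK : y ∈ ({x} : Set X))

theorem exists_isolating_rank_of_perfectKernel_univ_eq_empty
    (h : perfectKernel (univ : Set X) = ∅) :
    ∃ r : X → Ordinal.{u}, ∀ x, ∀ᶠ z in 𝓝 x, r x ≤ r z → z = x := by
  choose r hr_mem hr_succ using fun x : X =>
    exists_mem_iteratedDerivedSet_notMem_succ (mem_univ x) (h ▸ notMem_empty x)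
  refine ⟨r, fun x => ?_⟩
  have hiso : ¬ AccPt x (𝓟 (univᵈ[r x])) := fun hacc =>
    hr_succ x (by rw [iteratedDerivedSet_succ, relDerivedSet_apply]; exact ⟨hacc, hr_mem x⟩)
  rw [accPt_iff_frequently, not_frequently] at hiso
  filter_upwards [hiso] with z hz hle
  by_contra hzx
  exact hz ⟨hzx, iteratedDerivedSet_antitone _ hle (hr_mem z)⟩

end CantorBendixson

theorem Isometry.isGδ_range_of_isolating_rank {X Y ι : Type*} [PseudoMetricSpace X]
    [MetricSpace Y] [LinearOrder ι] [WellFoundedLT ι] {i : X → Y} (hi : Isometry i) {r : X → ι}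
    (hr : ∀ x, ∀ᶠ z in 𝓝 x, r x ≤ r z → z = x) : IsGδ (range i) := by
  choose ε hε hεr using fun x => Metric.eventually_nhds_iff.1 (hr x)
  let δ : ℕ → X → ℝ := fun n x => min (ε x) (1 / (n + 1))
  have hδ : ∀ n x, 0 < δ n x := fun n x => lt_min (hε x) Nat.one_div_pos_of_nat
  suffices range i = ⋂ n : ℕ, ⋃ x, ball (i x) (δ n x) by
    rw [this]
    exact .iInter_of_isOpen fun n => isOpen_iUnion fun x => isOpen_ball
  refine Subset.antisymm (range_subset_iff.2 fun x => mem_iInter.2 fun n =>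
    mem_iUnion.2 ⟨x, mem_ball_self (hδ n x)⟩) fun y hy => ?_
  choose xs hxs using fun n => mem_iUnion.1 (mem_iInter.1 hy n)
  have htends : Tendsto (fun n => i (xs n)) atTop (𝓝 y) := by
    refine tendsto_iff_dist_tendsto_zero.2 (squeeze_zero (fun _ => dist_nonneg) (fun n => ?_)
      tendsto_one_div_add_atTop_nhds_zero_nat)
    rw [dist_comm]
    exact (hxs n).le.trans (min_le_right _ _)
  set x₀ := xs (Function.argmin (r ∘ xs))
  have hnear : ∀ᶠ m in atTop, i (xs m) ∈ ball (i x₀) (ε x₀) :=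
    htends (isOpen_ball.mem_nhds ((mem_ball.1 (hxs _)).trans_le (min_le_left _ _)))
  have heq : ∀ᶠ m in atTop, i x₀ = i (xs m) := hnear.mono fun m hm => congrArg i
    (hεr x₀ (by rwa [mem_ball, hi.dist_eq] at hm) (Function.argmin_le (r ∘ xs) m)).symm
  exact ⟨x₀, tendsto_nhds_unique (tendsto_const_nhds.congr' heq) htends⟩

theorem IsGδ.polishSpace {α : Type*} [TopologicalSpace α] [PolishSpace α] {s : Set α}
    (hs : IsGδ s) : PolishSpace s := by
  obtain ⟨U, hU, rfl⟩ := hs.eq_iInter_nat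
  have := fun n => (hU n).polishSpace
  let F : (⋂ n, U n : Set α) → ∀ n, U n := fun x n => ⟨x, mem_iInter.1 x.2 n⟩
  have hF : Continuous F := continuous_pi fun n => continuous_subtype_val.subtype_mk _
  have hF_ind : IsInducing F :=
    .of_comp hF (g := fun y => (y 0 : α)) (by fun_prop) IsInducing.subtypeVal
  have hrange : range F = ⋂ n, {y | (y n : α) = y 0} := by
    refine Subset.antisymm (range_subset_iff.2 fun x => mem_iInter.2 fun n => rfl) fun y hy => ?_
    have hy : ∀ n, (y n : α) = y 0 := by simpa using hy
    exact ⟨⟨y 0, mem_iInter.2 fun n => hy n ▸ (y n).2⟩, funext fun n => Subtype.ext (hy n).symm⟩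
  refine Topology.IsClosedEmbedding.polishSpace (f := F)
    ⟨⟨hF_ind, fun a b hab => Subtype.ext (congrArg (fun y => (y 0 : α)) hab)⟩, ?_⟩
  rw [hrange]
  exact isClosed_iInter fun n => isClosed_eq (by fun_prop) (by fun_prop)

/-- A scattered topological space is Polish if and only if it is regular
(including `T1`) and second-countable. -/
theorem scattered_polish_iff_regular_secondCountable
    (X : Type*) [TopologicalSpace X]
    (hscat : ∀ A : Set X, A.Nonempty →
      ∃ x ∈ A, ∃ U : Set X, IsOpen U ∧ U ∩ A = {x}) :
    PolishSpace X ↔ (T1Space X ∧ RegularSpace X ∧ SecondCountableTopology X) := by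
  refine ⟨fun _ => ?_, fun ⟨_, _, _⟩ => ?_⟩
  · let := TopologicalSpace.upgradeIsCompletelyMetrizable X
    exact ⟨inferInstance, inferInstance, inferInstance⟩
  · let := TopologicalSpace.metrizableSpaceMetric X
    obtain ⟨r, hr⟩ := exists_isolating_rank_of_perfectKernel_univ_eq_empty
      (perfectKernel_eq_empty_of_forall_exists_isolated hscat univ)
    have hi := UniformSpace.Completion.coe_isometry (α := X)
    have := (hi.isGδ_range_of_isolating_rank hr).polishSpace
    exact hi.isEmbedding.toHomeomorph.isClosedEmbedding.polishSpace
end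

section
/- The symmetric inverse monoid I_ℕ with its canonical topology does not embed topologically into ℕ^ℕ with the product topology; equivalently, there is no countable family of right congruences on I_ℕ, each with countably many classes, whose equivalence classes form a basis of the canonical topology on I_ℕ. -/
/-!
The idempotents `{(n, n)}` converge to the empty partial bijection `∅` as `n → ∞`, since each
subbasic neighbourhood of `∅` excludes only one value of `n`. Right multiplication by `{(n, 0)}`
sends `{(n, n)}` to `{(n, 0)}` and fixes `∅`, so in both situations (the coordinates of an
antihomomorphic embedding into `ℕ^ℕ`, or right congruence classes forming a basis) the elements
`{(n, 0)}` would converge to `∅` as well. They cannot: none of them lies in the open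
neighbourhood `{h | 0 ∉ im h}` of `∅`.
-/

/-- A partial bijection of `ℕ`, encoded as its graph: a functional and
co-functional relation. -/
def IsPartialBij (R : Set (ℕ × ℕ)) : Prop :=
  (∀ x y y', (x, y) ∈ R → (x, y') ∈ R → y = y') ∧
  (∀ x x' y, (x, y) ∈ R → (x', y) ∈ R → x = x')

/-- The symmetric inverse monoid `I_ℕ` of all partial bijections between
subsets of `ℕ`. -/
def IN : Type := {R : Set (ℕ × ℕ) // IsPartialBij R}

/-- Left-to-right composition of partial bijections. -/
instance : Mul IN :=
  ⟨fun f g => ⟨{p | ∃ y, (p.1, y) ∈ f.1 ∧ (y, p.2) ∈ g.1}, by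
    obtain ⟨f, hf1, hf2⟩ := f; obtain ⟨g, hg1, hg2⟩ := g
    constructor
    · rintro x y y' ⟨a, ha1, ha2⟩ ⟨b, hb1, hb2⟩
      cases hf1 x a b ha1 hb1
      exact hg1 a y y' ha2 hb2
    · rintro x x' y ⟨a, ha1, ha2⟩ ⟨b, hb1, hb2⟩
      cases hg2 a b y ha2 hb2
      exact hf2 x x' a ha1 hb1⟩⟩

/-- The inverse of a partial bijection is its transpose. -/
instance : Inv IN :=
  ⟨fun f => ⟨{p | (p.2, p.1) ∈ f.1},
    ⟨fun x y y' h h' => f.2.2 y y' x h h',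
     fun x x' y h h' => f.2.1 y x x' h h'⟩⟩⟩

/-- The canonical Polish semigroup topology on `I_ℕ`, generated by the sets
`U_{x,y} = {h | (x,y) ∈ h}`, `W_x = {h | x ∉ dom h}` and
`W_x⁻¹ = {h | x ∉ im h}`. -/
instance : TopologicalSpace IN :=
  TopologicalSpace.generateFrom
    ({A | ∃ x y : ℕ, A = {h : IN | (x, y) ∈ h.1}} ∪
     {A | ∃ x : ℕ, A = {h : IN | ∀ y, (x, y) ∉ h.1}} ∪
     {A | ∃ y : ℕ, A = {h : IN | ∀ x, (x, y) ∉ h.1}})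

open Filter Topology

namespace IN

def empty : IN := ⟨∅, fun _ _ _ h => h.elim, fun _ _ _ h => h.elim⟩

def single (a b : ℕ) : IN :=
  ⟨{(a, b)}, fun _ _ _ h h' => by simp_all, fun _ _ _ h h' => by simp_all⟩

@[simp] lemma mem_single {a b : ℕ} {p : ℕ × ℕ} : p ∈ (single a b).1 ↔ p = (a, b) :=
  Iff.rfl

@[simp] lemma empty_mul (z : IN) : empty * z = empty :=
  Subtype.ext <| Set.eq_empty_of_forall_notMem fun _ ⟨_, h, _⟩ => h

@[simp] lemma single_mul_single (a b c : ℕ) : single a b * single b c = single a c := by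
  apply Subtype.ext
  ext ⟨x, z⟩
  constructor
  · rintro ⟨y, h₁, h₂⟩
    simp_all
  · rintro ⟨⟩
    exact ⟨b, rfl, rfl⟩

lemma tendsto_single_self : Tendsto (fun n => single n n) cofinite (𝓝 empty) := by
  rw [TopologicalSpace.nhds_generateFrom]
  refine tendsto_iInf.2 fun s => tendsto_iInf.2 fun ⟨hs, hsub⟩ => tendsto_principal.2 ?_
  rcases hsub with (⟨x, y, rfl⟩ | ⟨x, rfl⟩) | ⟨y, rfl⟩
  · exact hs.elim
  · filter_upwards [eventually_cofinite_ne x] with n hn y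
    simp [Ne.symm hn]
  · filter_upwards [eventually_cofinite_ne y] with n hn x
    simp [Ne.symm hn]

lemma isOpen_setOf_forall_notMem (y : ℕ) : IsOpen {h : IN | ∀ x, (x, y) ∉ h.1} :=
  .basic _ (Or.inr ⟨y, rfl⟩)

lemma not_tendsto_single_zero : ¬ Tendsto (fun n => single n 0) cofinite (𝓝 empty) := by
  intro h
  obtain ⟨n, hn⟩ := (h.eventually ((isOpen_setOf_forall_notMem 0).mem_nhds fun _ => id)).exists
  exact hn n rfl

lemma eventually_rel_single_zero {r : IN → IN → Prop}
    (hr : ∀ x y z, r x y → r (x * z) (y * z))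
    (h : ∀ᶠ n in cofinite, r empty (single n n)) :
    ∀ᶠ n in cofinite, r empty (single n 0) :=
  h.mono fun n hn => by simpa using hr _ _ (single n 0) hn

lemma tendsto_single_zero_of_isInducing {α : Type*} [TopologicalSpace α] [DiscreteTopology α]
    {φ : IN → α → α} (hφ : ∀ a b, φ (a * b) = φ b ∘ φ a) (hind : IsInducing φ) :
    Tendsto (fun n => single n 0) cofinite (𝓝 empty) := by
  have hself := tendsto_pi_nhds.1 ((hind.continuous.tendsto _).comp tendsto_single_self)
  refine hind.tendsto_nhds_iff.2 <| tendsto_pi_nhds.2 fun i => ?_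
  rw [nhds_discrete] at hself ⊢
  refine tendsto_pure.2 <| eventually_rel_single_zero (r := fun x y => φ y i = φ x i)
    (fun x y z h => ?_) (tendsto_pure.1 (hself i))
  simp only [hφ, Function.comp_apply, h]

lemma tendsto_single_zero_of_isTopologicalBasis {ι : Type*} {ρ : ι → IN → IN → Prop}
    (hρ : ∀ i, Equivalence (ρ i)) (hρmul : ∀ i x y z, ρ i x y → ρ i (x * z) (y * z))
    (hbasis : TopologicalSpace.IsTopologicalBasis {s : Set IN | ∃ i x, s = {y | ρ i x y}}) :
    Tendsto (fun n => single n 0) cofinite (𝓝 empty) := by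
  refine hbasis.nhds_hasBasis.tendsto_right_iff.2 ?_
  rintro _ ⟨⟨i, x, rfl⟩, hx⟩
  have hclass : {y | ρ i x y} = {y | ρ i empty y} := by
    ext y; exact ⟨(hρ i).trans ((hρ i).symm hx), (hρ i).trans hx⟩
  have hopen : IsOpen {y | ρ i empty y} := hclass ▸ hbasis.isOpen ⟨i, x, rfl⟩
  rw [hclass]
  exact eventually_rel_single_zero (hρmul i) <|
    tendsto_single_self.eventually (hopen.mem_nhds ((hρ i).refl _))

end IN

/-- The symmetric inverse monoid `I_ℕ` with its canonical topology does not
embed topologically into `ℕ^ℕ` (functions under left-to-right composition,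
product topology); equivalently, there is no countable family of right
congruences on `I_ℕ`, each with countably many classes, whose equivalence
classes form a basis of the canonical topology. -/
theorem IN_does_not_embed_into_NN :
    (¬ ∃ φ : IN → (ℕ → ℕ), (∀ a b : IN, φ (a * b) = φ b ∘ φ a) ∧
        Topology.IsEmbedding φ) ∧
    (¬ ∃ ρ : ℕ → (IN → IN → Prop),
        (∀ i, Equivalence (ρ i)) ∧
        (∀ i, ∀ x y z : IN, ρ i x y → ρ i (x * z) (y * z)) ∧
        (∀ i, ∃ f : IN → ℕ, ∀ x y : IN, ρ i x y ↔ f x = f y) ∧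
        TopologicalSpace.IsTopologicalBasis
          {s : Set IN | ∃ i : ℕ, ∃ x : IN, s = {y : IN | ρ i x y}}) :=
  ⟨fun ⟨_, hφ, hemb⟩ =>
      IN.not_tendsto_single_zero (IN.tendsto_single_zero_of_isInducing hφ hemb.isInducing),
    fun ⟨_, hρ, hρmul, _, hbasis⟩ =>
      IN.not_tendsto_single_zero (IN.tendsto_single_zero_of_isTopologicalBasis hρ hρmul hbasis)⟩
end

section
/- Let X = {0} ∪ {1/(n+1) : n ∈ ℕ} with the semilattice operation min, endowed with the topology in which every nonzero element is isolated and the sets U_m = {1/(2n+1) : n ≥ m} ∪ {0} form a neighborhood basis at 0. Then there is no countable family of congruences on X, each with countably many classes, whose classes form a basis of this topology; consequently X does not embed topologically into ℕ^ℕ. -/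
/-- The carrier set `{0} ∪ {1/(n+1) : n ∈ ℕ} ⊆ ℝ`. -/
def Xcarrier : Set ℝ := {x | x = 0 ∨ ∃ n : ℕ, x = 1 / ((n : ℝ) + 1)}

/-- The semilattice `X = {0} ∪ {1/(n+1) : n ∈ ℕ}` with operation `min`. -/
def Xsl : Type := {x : ℝ // x ∈ Xcarrier}

noncomputable instance : Mul Xsl :=
  ⟨fun a b => ⟨min a.1 b.1, by
    rcases min_choice a.1 b.1 with h | h <;> rw [h]
    · exact a.2
    · exact b.2⟩⟩

/-- The topology on `X` in which every nonzero element is isolated and the sets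
`U_m = {1/(2n+1) : n ≥ m} ∪ {0}` form a neighborhood basis at `0`. -/
instance : TopologicalSpace Xsl :=
  TopologicalSpace.generateFrom
    ({A | ∃ x : Xsl, x.1 ≠ 0 ∧ A = {x}} ∪
     {A | ∃ m : ℕ, A = {x : Xsl | x.1 = 0 ∨ ∃ n : ℕ, m ≤ n ∧ x.1 = 1 / (2 * (n : ℝ) + 1)}})


/-!
If the congruence classes of `X` formed a basis, some class `C ∋ 0` would lie in `U₀`. Being
open, `C` contains some `U_m`, hence `1/(2m+1)`; multiplying `0 ~ 1/(2m+1)` by `1/(2m+2)` gives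
`0 ~ 1/(2m+2)`, so `1/(2m+2) ∈ C ⊆ U₀`, which it is not. An embedding `φ` into `ℕ^ℕ` would
produce such a basis: the relations `φ y ∈ cylinder (φ x) n` have finitely determined classes,
pull back the cylinder basis, and are right congruences because `φ (x * z) = φ z ∘ φ x`.
-/

open TopologicalSpace Topology PiNat

def IsCountableCongruenceBasis {X : Type*} [Mul X] [TopologicalSpace X]
    (ρ : ℕ → X → X → Prop) : Prop :=
  (∀ i, Equivalence (ρ i)) ∧
  (∀ i, ∀ x y z : X, ρ i x y → ρ i (x * z) (y * z) ∧ ρ i (z * x) (z * y)) ∧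
  (∀ i, ∃ f : X → ℕ, ∀ x y : X, ρ i x y ↔ f x = f y) ∧
  IsTopologicalBasis {s : Set X | ∃ i : ℕ, ∃ x : X, s = {y : X | ρ i x y}}

theorem equivalence_mem_cylinder {E : ℕ → Type*} (n : ℕ) :
    Equivalence fun x y : (∀ n, E n) => y ∈ cylinder x n :=
  ⟨fun x => self_mem_cylinder x n, fun h => (mem_cylinder_comm _ _ _).1 h,
    fun h h' i hi => (h' i hi).trans (h i hi)⟩

theorem exists_nat_eq_iff_mem_cylinder {E : Type*} [Countable E] (n : ℕ) :
    ∃ f : (ℕ → E) → ℕ, ∀ x y, y ∈ cylinder x n ↔ f x = f y := by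
  obtain ⟨g, hg⟩ := Countable.exists_injective_nat (Fin n → E)
  refine ⟨fun x => g fun i => x i, fun x y => ?_⟩
  rw [hg.eq_iff, mem_cylinder_iff, funext_iff]
  exact ⟨fun h i => (h i i.2).symm, fun h i hi => (h ⟨i, hi⟩).symm⟩

theorem isTopologicalBasis_preimage_cylinder {X : Type*} [TopologicalSpace X] {E : ℕ → Type*}
    [∀ n, TopologicalSpace (E n)] [∀ n, DiscreteTopology (E n)] {φ : X → ∀ n, E n}
    (hφ : IsInducing φ) : IsTopologicalBasis {s | ∃ n x, s = φ ⁻¹' cylinder (φ x) n} := by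
  refine ((isTopologicalBasis_cylinders E).isInducing hφ).isTopologicalBasis_of_exists_subset
    ?_ ?_
  · rintro _ ⟨n, x, rfl⟩
    exact (isOpen_cylinder E _ n).preimage hφ.continuous
  · rintro _ ⟨_, ⟨z, n, rfl⟩, rfl⟩ x hx
    exact ⟨_, ⟨n, x, rfl⟩, self_mem_cylinder _ _,
      Set.preimage_mono (mem_cylinder_iff_eq.1 hx).subset⟩

theorem mem_cylinder_mul_right {X : Type*} [Mul X] {φ : X → ℕ → ℕ}
    (hφ : ∀ a b, φ (a * b) = φ b ∘ φ a) {x y : X} {n : ℕ} (z : X)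
    (h : φ y ∈ cylinder (φ x) n) : φ (y * z) ∈ cylinder (φ (x * z)) n := by
  rw [hφ, hφ, mem_cylinder_iff]
  exact fun i hi => congrArg (φ z) (mem_cylinder_iff.1 h i hi)

theorem exists_isCountableCongruenceBasis_of_isEmbedding {X : Type*} [TopologicalSpace X]
    [CommMagma X] {φ : X → ℕ → ℕ} (hmul : ∀ a b, φ (a * b) = φ b ∘ φ a) (hφ : IsEmbedding φ) :
    ∃ ρ : ℕ → X → X → Prop, IsCountableCongruenceBasis ρ := by
  refine ⟨fun n x y => φ y ∈ cylinder (φ x) n, fun n => (equivalence_mem_cylinder n).comap φ,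
    fun n x y z h => ?_, fun n => ?_, isTopologicalBasis_preimage_cylinder hφ.isInducing⟩
  · refine ⟨mem_cylinder_mul_right hmul z h, ?_⟩
    simpa only [mul_comm z] using mem_cylinder_mul_right hmul z h
  · obtain ⟨f, hf⟩ := exists_nat_eq_iff_mem_cylinder (E := ℕ) n
    exact ⟨f ∘ φ, fun x y => hf _ _⟩

namespace Xsl

def zero : Xsl := ⟨0, Or.inl rfl⟩

noncomputable def recip (n : ℕ) : Xsl := ⟨1 / ((n : ℝ) + 1), Or.inr ⟨n, rfl⟩⟩

/-- The neighbourhood `U_m` of `0`. -/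
def basicNhd (m : ℕ) : Set Xsl :=
  {x | x.1 = 0 ∨ ∃ n : ℕ, m ≤ n ∧ x.1 = 1 / (2 * (n : ℝ) + 1)}

noncomputable instance : CommMagma Xsl where
  mul_comm a b := Subtype.ext (min_comm a.1 b.1)

theorem mul_eq_left {a b : Xsl} (h : a.1 ≤ b.1) : a * b = a :=
  Subtype.ext (min_eq_left h)

protected theorem zero_mul (x : Xsl) : zero * x = zero :=
  mul_eq_left <| by rcases x.2 with h | ⟨n, h⟩ <;> rw [h] <;> positivity

theorem recip_mul_of_le {k n : ℕ} (h : k ≤ n) : recip k * recip n = recip n := by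
  rw [mul_comm]
  exact mul_eq_left (Nat.one_div_le_one_div h)

theorem basicNhd_anti : Antitone basicNhd := by
  rintro m m' h x (hx | ⟨n, hn, hx⟩)
  exacts [Or.inl hx, Or.inr ⟨n, h.trans hn, hx⟩]

theorem isOpen_basicNhd (m : ℕ) : IsOpen (basicNhd m) :=
  GenerateOpen.basic _ (Or.inr ⟨m, rfl⟩)

theorem zero_mem_basicNhd (m : ℕ) : zero ∈ basicNhd m := Or.inl rfl

theorem recip_two_mul_mem_basicNhd (m : ℕ) : recip (2 * m) ∈ basicNhd m :=
  Or.inr ⟨m, le_rfl, by simp [recip]⟩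

theorem recip_two_mul_add_one_notMem_basicNhd (m : ℕ) : recip (2 * m + 1) ∉ basicNhd 0 := by
  rintro (h | ⟨n, -, h⟩)
  · exact Nat.one_div_pos_of_nat.ne' h
  · have hreal : ((2 * m + 2 : ℕ) : ℝ) = 2 * n + 1 := by
      simpa [recip, add_assoc, one_add_one_eq_two] using h
    have hnat : 2 * m + 2 = 2 * n + 1 := by exact_mod_cast hreal
    omega

theorem exists_basicNhd_subset_of_isOpen {V : Set Xsl} (hV : IsOpen V) (h0 : zero ∈ V) :
    ∃ m, basicNhd m ⊆ V := by
  induction hV with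
  | basic A hA =>
    rcases hA with ⟨x, hx, rfl⟩ | ⟨m, rfl⟩
    · exact absurd (congrArg Subtype.val h0).symm hx
    · exact ⟨m, le_rfl⟩
  | univ => exact ⟨0, Set.subset_univ _⟩
  | inter V W _ _ ihV ihW =>
    obtain ⟨m, hm⟩ := ihV h0.1
    obtain ⟨m', hm'⟩ := ihW h0.2
    exact ⟨max m m', Set.subset_inter ((basicNhd_anti (le_max_left _ _)).trans hm)
      ((basicNhd_anti (le_max_right _ _)).trans hm')⟩
  | sUnion S _ ih =>
    obtain ⟨s, hs, h0s⟩ := h0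
    obtain ⟨m, hm⟩ := ih s hs h0s
    exact ⟨m, hm.trans (Set.subset_sUnion_of_mem hs)⟩

theorem not_exists_isCountableCongruenceBasis :
    ¬ ∃ ρ : ℕ → Xsl → Xsl → Prop, IsCountableCongruenceBasis ρ := by
  rintro ⟨ρ, hequiv, hcong, -, hbasis⟩
  obtain ⟨_, ⟨i, x, rfl⟩, hx, hsub⟩ :=
    hbasis.exists_subset_of_mem_open (zero_mem_basicNhd 0) (isOpen_basicNhd 0)
  obtain ⟨m, hm⟩ := exists_basicNhd_subset_of_isOpen (hbasis.isOpen ⟨i, x, rfl⟩) hx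
  have h₁ : ρ i zero (recip (2 * m)) :=
    (hequiv i).trans ((hequiv i).symm hx) (hm (recip_two_mul_mem_basicNhd m))
  have h₂ : ρ i zero (recip (2 * m + 1)) := by
    simpa only [Xsl.zero_mul, recip_mul_of_le (Nat.le_succ _)] using
      (hcong i _ _ (recip (2 * m + 1)) h₁).1
  exact recip_two_mul_add_one_notMem_basicNhd m (hsub ((hequiv i).trans hx h₂))

end Xsl

/-- There is no countable family of congruences on `X`, each with countably
many classes, whose classes form a basis of the topology; consequently `X` does
not embed topologically into `ℕ^ℕ` (functions under left-to-right composition,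
product topology). -/
theorem Xsl_no_congruence_basis_and_no_embedding :
    (¬ ∃ ρ : ℕ → (Xsl → Xsl → Prop),
        (∀ i, Equivalence (ρ i)) ∧
        (∀ i, ∀ x y z : Xsl, ρ i x y → ρ i (x * z) (y * z) ∧ ρ i (z * x) (z * y)) ∧
        (∀ i, ∃ f : Xsl → ℕ, ∀ x y : Xsl, ρ i x y ↔ f x = f y) ∧
        TopologicalSpace.IsTopologicalBasis
          {s : Set Xsl | ∃ i : ℕ, ∃ x : Xsl, s = {y : Xsl | ρ i x y}}) ∧
    (¬ ∃ φ : Xsl → (ℕ → ℕ), (∀ a b : Xsl, φ (a * b) = φ b ∘ φ a) ∧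
        Topology.IsEmbedding φ) :=
  ⟨Xsl.not_exists_isCountableCongruenceBasis, fun ⟨_, hmul, hφ⟩ =>
    Xsl.not_exists_isCountableCongruenceBasis
      (exists_isCountableCongruenceBasis_of_isEmbedding hmul hφ)⟩
end

section
/- Let T = {0} ∪ {x_n : n ∈ ℕ} be the semilattice with ab = a if a = b and ab = 0 otherwise, and let S = T × {1,−1} with coordinatewise multiplication (second coordinate in the two-element group). Endow S with the topology in which every point except (0,1) is isolated and the sets U_n = {(0,1)} ∪ {(x_i,1) : i ≥ n} form a neighborhood basis at (0,1). Then there is no countable family of congruences on S, each with countably many classes, whose classes form a basis of this topology. -/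
/-!
Every point but `(0, 1)` is isolated, so `{(0, -1)}` must be a class of some congruence `ρ` of the
basis. But the `ρ`-class of `(0, 1)` is open, hence contains some `(xₙ, 1)`, and multiplying by
`(xₙ, -1)` shows that `ρ` identifies `(0, -1)` with `(xₙ, -1)`.
-/

/-- The semigroup `S = T × {1,-1}` where `T = {0} ∪ {xₙ : n ∈ ℕ}` is the
semilattice with `a * b = a` if `a = b` and `a * b = 0` otherwise, and the
second coordinate lies in the two-element group (modelled as `Bool` under
`xor`).  Here `T` is modelled as `Option ℕ` with `none` as `0`, and the point
`(0, 1)` corresponds to `(none, false)`. -/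
def S13 : Type := Option ℕ × Bool

instance : Mul S13 :=
  ⟨fun p q => (if p.1 = q.1 then p.1 else none, xor p.2 q.2)⟩

/-- The topology in which every point except `(0,1) = (none, false)` is
isolated and the sets `Uₙ = {(0,1)} ∪ {(xᵢ,1) : i ≥ n}` form a neighborhood
basis at `(0,1)`. -/
instance : TopologicalSpace S13 :=
  TopologicalSpace.generateFrom
    ({A | ∃ p : S13, p ≠ (none, false) ∧ A = {p}} ∪
     {A | ∃ n : ℕ, A = {p : S13 | p = (none, false) ∨
        ∃ i : ℕ, n ≤ i ∧ p = (some i, false)}})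

open Filter Topology TopologicalSpace

theorem TopologicalSpace.IsTopologicalBasis.exists_rel_imp_eq_of_isOpen_singleton
    {X ι : Type*} [TopologicalSpace X] {ρ : ι → X → X → Prop} (hρ : ∀ i, Equivalence (ρ i))
    (hB : IsTopologicalBasis {s | ∃ i x, s = {y | ρ i x y}}) {a : X} (ha : IsOpen {a}) :
    ∃ i, ∀ y, ρ i a y → y = a := by
  obtain ⟨_, ⟨i, x, rfl⟩, hxa, hsub⟩ := hB.exists_subset_of_mem_open (Set.mem_singleton a) ha
  exact ⟨i, fun y hy => hsub ((hρ i).trans hxa hy)⟩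

namespace S13

def zero (s : Bool) : S13 := (none, s)

def atom (n : ℕ) (s : Bool) : S13 := (some n, s)

theorem atom_ne_zero (n : ℕ) (s t : Bool) : atom n s ≠ zero t :=
  fun h => Option.some_ne_none n (congrArg Prod.fst h)

theorem zero_mul_atom (n : ℕ) (s t : Bool) : zero s * atom n t = zero (xor s t) := rfl

theorem atom_mul_atom_self (n : ℕ) (s t : Bool) : atom n s * atom n t = atom n (xor s t) :=
  show ((if some n = some n then some n else none), _) = _ by rw [if_pos rfl]; rfl

theorem isOpen_singleton_zero_true : IsOpen {zero true} :=
  .basic _ (.inl ⟨zero true, fun h => Bool.noConfusion (congrArg Prod.snd h), rfl⟩)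

theorem tendsto_atom_false : Tendsto (atom · false) atTop (𝓝 (zero false)) := by
  rw [nhds_generateFrom]
  refine tendsto_iInf.2 fun s => tendsto_iInf.2 fun ⟨hs, hgen⟩ => tendsto_principal.2 ?_
  rcases hgen with ⟨p, hp, rfl⟩ | ⟨n, rfl⟩
  · exact absurd hs.symm hp
  · exact eventually_atTop.2 ⟨n, fun i hi => .inr ⟨i, hi, rfl⟩⟩

end S13

/-- There is no countable family of congruences on `S`, each with countably
many classes, whose classes form a basis of this topology. -/
theorem S13_no_congruence_basis :
    ¬ ∃ ρ : ℕ → (S13 → S13 → Prop),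
        (∀ i, Equivalence (ρ i)) ∧
        (∀ i, ∀ x y z : S13, ρ i x y → ρ i (x * z) (y * z) ∧ ρ i (z * x) (z * y)) ∧
        (∀ i, ∃ f : S13 → ℕ, ∀ x y : S13, ρ i x y ↔ f x = f y) ∧
        TopologicalSpace.IsTopologicalBasis
          {s : Set S13 | ∃ i : ℕ, ∃ x : S13, s = {y : S13 | ρ i x y}} := by
  rintro ⟨ρ, hρ, hcong, -, hB⟩
  obtain ⟨j, hj⟩ := hB.exists_rel_imp_eq_of_isOpen_singleton hρ S13.isOpen_singleton_zero_true
  have hclass : {y | ρ j (S13.zero false) y} ∈ 𝓝 (S13.zero false) :=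
    (hB.isOpen ⟨j, _, rfl⟩).mem_nhds ((hρ j).refl _)
  obtain ⟨n, hn⟩ := (S13.tendsto_atom_false.eventually hclass).exists
  have h := (hcong j _ _ (S13.atom n true) hn).1
  rw [S13.zero_mul_atom, S13.atom_mul_atom_self] at h
  exact S13.atom_ne_zero n true true (hj _ h)
end

section
/- For any topological semigroup S that embeds topologically into ℕ^ℕ, the monoid S¹ obtained by adjoining an isolated external identity also embeds topologically into ℕ^ℕ, and the semigroup S⁰ obtained by adjoining an isolated external zero also embeds topologically into ℕ^ℕ. -/
/-!
Let `ι : ℕ^ℕ → ℕ^ℕ` make `f` act on the even numbers, `ι f (2n) = 2 f(n)`, and send every odd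
number to `1`. Then `ι` is a homomorphism and a topological embedding whose range is closed,
so `ι ∘ φ` embeds `S` as well. Every `ι f` fixes `1`, hence the identity is an identity and the
constant map `1` is a zero for the range of `ι`; neither lies in that closed range (the identity
moves `3` off `1`, the constant is odd at `0`), so sending the adjoined isolated point to it
gives a topological embedding of `S¹`, resp. `S⁰`.
-/

open Topology Set Function

section AdjoinIsolatedPoint

variable {S Y : Type*} [TopologicalSpace S] [TopologicalSpace Y]

def optionHomeomorphSumUnit :
    @Homeomorph (Option S) (S ⊕ Unit) (.coinduced some ‹_›) _ :=
  letI : TopologicalSpace (Option S) := .coinduced some ‹_›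
  { Equiv.optionEquivSumPUnit.{0} S with
    continuous_toFun := continuous_coinduced_dom.mpr continuous_inl
    continuous_invFun := continuous_sum_dom.mpr ⟨continuous_coinduced_rng, continuous_const⟩ }

theorem isEmbedding_optionElim [T1Space Y] {f : S → Y} (hf : IsEmbedding f) {y : Y}
    (hy : y ∉ closure (range f)) :
    @IsEmbedding (Option S) Y (.coinduced some ‹_›) _ (Option.elim · y f) := by
  let : TopologicalSpace (Option S) := .coinduced some ‹_›
  have hy' : y ∉ range f := fun h => hy (subset_closure h)
  have hsum : IsEmbedding (Sum.elim f fun _ : Unit => y) :=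
    hf.sumElim (.of_subsingleton _)
      (by rwa [range_const, disjoint_singleton_right])
      (by rwa [range_const, closure_singleton, disjoint_singleton_right])
  convert hsum.comp optionHomeomorphSumUnit.isEmbedding using 1
  ext (_ | _) <;> rfl

end AdjoinIsolatedPoint

def liftToEvens (f : ℕ → ℕ) (n : ℕ) : ℕ := if Even n then 2 * f (n / 2) else 1

theorem liftToEvens_two_mul (f : ℕ → ℕ) (n : ℕ) : liftToEvens f (2 * n) = 2 * f n := by
  simp [liftToEvens]

theorem liftToEvens_two_mul_add_one (f : ℕ → ℕ) (n : ℕ) : liftToEvens f (2 * n + 1) = 1 := by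
  simp [liftToEvens]

theorem liftToEvens_comp (f g : ℕ → ℕ) :
    liftToEvens (g ∘ f) = liftToEvens g ∘ liftToEvens f := by
  ext n
  rcases Nat.even_or_odd' n with ⟨m, rfl | rfl⟩
  · simp [liftToEvens_two_mul]
  · simpa [liftToEvens_two_mul_add_one] using (liftToEvens_two_mul_add_one g 0).symm

theorem continuous_liftToEvens : Continuous liftToEvens :=
  continuous_pi fun n => by
    unfold liftToEvens
    split_ifs
    exacts [continuous_const.mul (continuous_apply _), continuous_const]

theorem isEmbedding_liftToEvens : IsEmbedding liftToEvens := by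
  refine LeftInverse.isEmbedding (f := fun g n => g (2 * n) / 2) (fun f => ?_)
    (continuous_pi fun n =>
      (continuous_of_discreteTopology (f := (· / 2))).comp (continuous_apply (2 * n)))
    continuous_liftToEvens
  ext n
  simp [liftToEvens_two_mul]

theorem range_liftToEvens :
    range liftToEvens = {g | ∀ n, Even (g (2 * n)) ∧ g (2 * n + 1) = 1} := by
  ext g
  constructor
  · rintro ⟨f, rfl⟩ n
    simp [liftToEvens_two_mul, liftToEvens_two_mul_add_one]
  · intro hg
    refine ⟨fun n => g (2 * n) / 2, funext fun n => ?_⟩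
    rcases Nat.even_or_odd' n with ⟨m, rfl | rfl⟩
    · simp [liftToEvens_two_mul, Nat.two_mul_div_two_of_even (hg m).1]
    · simp [liftToEvens_two_mul_add_one, (hg m).2]

theorem isClosed_range_liftToEvens : IsClosed (range liftToEvens) := by
  rw [range_liftToEvens, ofPred_forall]
  refine isClosed_iInter fun n => IsClosed.inter ?_ ?_
  · exact (isClosed_discrete {m | Even m}).preimage (continuous_apply (2 * n))
  · exact isClosed_eq (continuous_apply _) continuous_const

theorem id_notMem_range_liftToEvens : id ∉ range liftToEvens := fun ⟨f, hf⟩ => by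
  have h3 := congrFun hf (2 * 1 + 1)
  rw [liftToEvens_two_mul_add_one] at h3
  simp at h3

theorem const_one_notMem_range_liftToEvens : (fun _ => 1) ∉ range liftToEvens :=
  fun ⟨f, hf⟩ => by
    have h0 := congrFun hf (2 * 0)
    rw [liftToEvens_two_mul] at h0
    omega

theorem notMem_closure_range_liftToEvens_comp {X : Type*} {φ : X → ℕ → ℕ} {g : ℕ → ℕ}
    (hg : g ∉ range liftToEvens) : g ∉ closure (range (liftToEvens ∘ φ)) := fun h =>
  hg <| closure_minimal (range_comp_subset_range _ _) isClosed_range_liftToEvens h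

theorem adjoin_identity_or_zero_embeds_in_NN_general
    (S : Type*) [Semigroup S] [TopologicalSpace S]
    (h : ∃ φ : S → (ℕ → ℕ), (∀ a b : S, φ (a * b) = φ b ∘ φ a) ∧
      Topology.IsEmbedding φ) :
    (letI : TopologicalSpace (WithOne S) :=
        TopologicalSpace.coinduced (fun s : S => (s : WithOne S)) ‹_›
      ∃ ψ : WithOne S → (ℕ → ℕ),
        (∀ a b : WithOne S, ψ (a * b) = ψ b ∘ ψ a) ∧ Topology.IsEmbedding ψ) ∧
    (letI : TopologicalSpace (WithZero S) :=
        TopologicalSpace.coinduced (fun s : S => (s : WithZero S)) ‹_›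
      ∃ ψ : WithZero S → (ℕ → ℕ),
        (∀ a b : WithZero S, ψ (a * b) = ψ b ∘ ψ a) ∧ Topology.IsEmbedding ψ) := by
  obtain ⟨φ, hφ_mul, hφ⟩ := h
  have hmul (a b : S) : liftToEvens (φ (a * b)) = liftToEvens (φ b) ∘ liftToEvens (φ a) := by
    rw [hφ_mul, liftToEvens_comp]
  have hemb := isEmbedding_liftToEvens.comp hφ
  -- `WithOne S` and `WithZero S` are `Option S`, with coercion `some`.
  refine ⟨⟨fun x => Option.elim x id (liftToEvens ∘ φ), ?_, isEmbedding_optionElim hemb ?_⟩,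
    ⟨fun x => Option.elim x (fun _ => 1) (liftToEvens ∘ φ), ?_, isEmbedding_optionElim hemb ?_⟩⟩
  · rintro (_ | a) (_ | b) <;> first | rfl | exact hmul a b
  · exact notMem_closure_range_liftToEvens_comp id_notMem_range_liftToEvens
  · rintro (_ | a) (_ | b) <;> first | rfl | exact hmul a b
  · exact notMem_closure_range_liftToEvens_comp const_one_notMem_range_liftToEvens

/-- If a topological semigroup `S` embeds topologically into `ℕ^ℕ` (functions
under left-to-right composition, product topology), then so do the monoid `S¹`
obtained by adjoining an isolated external identity and the semigroup `S⁰`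
obtained by adjoining an isolated external zero.  The topology on `WithOne S`
(resp. `WithZero S`) is the one making the new point isolated and `S` an open
subspace with its original topology, i.e. the topology coinduced by the
coercion. -/
theorem adjoin_identity_or_zero_embeds_in_NN
    (S : Type*) [Semigroup S] [TopologicalSpace S] [ContinuousMul S]
    (h : ∃ φ : S → (ℕ → ℕ), (∀ a b : S, φ (a * b) = φ b ∘ φ a) ∧
      Topology.IsEmbedding φ) :
    (letI : TopologicalSpace (WithOne S) :=
        TopologicalSpace.coinduced (fun s : S => (s : WithOne S)) ‹_›
      ∃ ψ : WithOne S → (ℕ → ℕ),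
        (∀ a b : WithOne S, ψ (a * b) = ψ b ∘ ψ a) ∧ Topology.IsEmbedding ψ) ∧
    (letI : TopologicalSpace (WithZero S) :=
        TopologicalSpace.coinduced (fun s : S => (s : WithZero S)) ‹_›
      ∃ ψ : WithZero S → (ℕ → ℕ),
        (∀ a b : WithZero S, ψ (a * b) = ψ b ∘ ψ a) ∧ Topology.IsEmbedding ψ) :=
  adjoin_identity_or_zero_embeds_in_NN_general S h
end

section
/- If S_n, for n ∈ ℕ, are topological semigroups each topologically isomorphic to a subsemigroup of ℕ^ℕ, then the Tychonoff product ∏_{n∈ℕ} S_n embeds topologically into ℕ^ℕ. -/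
/-!
Cut `ℕ` into the infinite blocks `A n = {pair n m | m ∈ ℕ}`. A family `(f n)` of self-maps of `ℕ`
assembles into the self-map of `ℕ` that acts on `A n` as `f n` does on `ℕ`; this assembly turns
componentwise composition into composition and is a topological embedding of `(ℕ^ℕ)^ℕ` into
`ℕ^ℕ`. Precomposing it with the product of the given embeddings `S n → ℕ^ℕ` embeds `∏ n, S n`.
-/

open Topology

theorem Function.Injective.isEmbedding_of_discreteTopology {X Y : Type*} [TopologicalSpace X]
    [DiscreteTopology X] [TopologicalSpace Y] [DiscreteTopology Y] {f : X → Y}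
    (hf : Function.Injective f) : IsEmbedding f :=
  (IsOpenEmbedding.of_continuous_injective_isOpenMap continuous_of_discreteTopology hf
    fun _ _ => isOpen_discrete _).isEmbedding

namespace Equiv

variable {α β γ : Type*} (e : α × β ≃ γ)

def piUncurryHomeomorph (X : Type*) [TopologicalSpace X] : (α → β → X) ≃ₜ (γ → X) where
  toFun g c := g (e.symm c).1 (e.symm c).2
  invFun h a b := h (e (a, b))
  left_inv g := by simp
  right_inv h := by simp
  continuous_toFun := by fun_prop
  continuous_invFun := by fun_prop

/-- Reading `γ` as the disjoint union of the blocks `range (e (a, ·))`, `e.blockDiag f` maps each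
block into itself, acting on the `a`-th one as `f a` acts on `β`. -/
def blockDiag (f : α → β → β) (c : γ) : γ :=
  e ((e.symm c).1, f (e.symm c).1 (e.symm c).2)

theorem blockDiag_comp (f g : α → β → β) :
    e.blockDiag f ∘ e.blockDiag g = e.blockDiag fun a => f a ∘ g a := by
  ext c; simp [blockDiag]

theorem isEmbedding_blockDiag [TopologicalSpace β] [DiscreteTopology β] [TopologicalSpace γ]
    [DiscreteTopology γ] : IsEmbedding e.blockDiag := by
  have hblock : ∀ c : γ, IsEmbedding fun b => e ((e.symm c).1, b) := fun c =>
    (e.injective.comp (Prod.mk_right_injective _)).isEmbedding_of_discreteTopology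
  exact (IsEmbedding.piMap hblock).comp (e.piUncurryHomeomorph β).isEmbedding

end Equiv

/-- If `S n`, `n ∈ ℕ`, are topological semigroups each topologically isomorphic
to a subsemigroup of `ℕ^ℕ` (functions under left-to-right composition, product
topology), then the Tychonoff product `∏ n, S n` embeds topologically into
`ℕ^ℕ`. -/
theorem pi_embeds_in_NN_of_each_embeds
    (S : ℕ → Type*) [∀ n, Semigroup (S n)] [∀ n, TopologicalSpace (S n)]
    (h : ∀ n, ∃ φ : S n → (ℕ → ℕ), (∀ a b : S n, φ (a * b) = φ b ∘ φ a) ∧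
      Topology.IsEmbedding φ) :
    ∃ Φ : (∀ n, S n) → (ℕ → ℕ),
      (∀ a b : ∀ n, S n, Φ (a * b) = Φ b ∘ Φ a) ∧ Topology.IsEmbedding Φ := by
  choose φ hφ_mul hφ_emb using h
  refine ⟨Nat.pairEquiv.blockDiag ∘ Pi.map φ, fun a b => ?_,
    Nat.pairEquiv.isEmbedding_blockDiag.comp (IsEmbedding.piMap hφ_emb)⟩
  have hφ_mul' : Pi.map φ (a * b) = fun n => φ n (b n) ∘ φ n (a n) :=
    funext fun n => hφ_mul n (a n) (b n)
  simp only [Function.comp_apply, hφ_mul', Equiv.blockDiag_comp, Pi.map_apply]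
end

section
/- Every Clifford subsemigroup of ℕ^ℕ, endowed with the subspace topology, is a topological inverse semigroup; that is, the inversion map s ↦ s⁻¹ is continuous on any Clifford subsemigroup of ℕ^ℕ. -/
/-!
If `g` is a Clifford inverse of `f`, then `g n` is the unique point `x` of the range of `f` with
`f (f x) = f n`, and `x = g n` satisfies this through the identities `f (g (g n)) = g n` and
`f (f (g n)) = f n`. So `g n` is determined by the values of `f` at the four points
`n, g (g n), g n, f (g n)`. In the topology of pointwise convergence on a discrete space these
values are locally constant in `f`, hence so is `g n`.
-/

open Topology

/-- Equivalently, `f` and `g` are mutually inverse elements of the maximal subgroup of `α → α`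
at the idempotent `g ∘ f`. -/
structure IsCliffordInverse {α : Type*} (f g : α → α) : Prop where
  comp_inv_comp : f ∘ g ∘ f = f
  inv_comp_inv : g ∘ f ∘ g = g
  inv_comp_comm : g ∘ f = f ∘ g

namespace IsCliffordInverse

variable {α : Type*} {f g : α → α}

theorem inv_apply_comm (h : IsCliffordInverse f g) (m : α) : g (f m) = f (g m) :=
  congrFun h.inv_comp_comm m

theorem apply_inv_apply (h : IsCliffordInverse f g) (m : α) : f (g (f m)) = f m :=
  congrFun h.comp_inv_comp m

theorem inv_apply_inv (h : IsCliffordInverse f g) (m : α) : g (f (g m)) = g m :=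
  congrFun h.inv_comp_inv m

theorem inv_apply_apply_apply (h : IsCliffordInverse f g) (m : α) : g (f (f m)) = f m := by
  rw [h.inv_apply_comm, h.apply_inv_apply]

theorem apply_inv_inv_apply (h : IsCliffordInverse f g) (n : α) : f (g (g n)) = g n := by
  rw [← h.inv_apply_comm, h.inv_apply_inv]

theorem apply_apply_inv_apply (h : IsCliffordInverse f g) (n : α) : f (f (g n)) = f n := by
  rw [← h.inv_apply_comm, h.apply_inv_apply]

/-- On the range of `f`, `g` undoes `f`, so `g ∘ g` undoes `f ∘ f`. -/
theorem eq_inv_apply_of_apply_apply_eq (h : IsCliffordInverse f g) {n x u : α} (hu : f u = x)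
    (hx : f (f x) = f n) : x = g n :=
  calc x = g (f x) := by rw [← hu, h.inv_apply_apply_apply u]
    _ = g (g (f (f x))) := by rw [h.inv_apply_apply_apply x]
    _ = g (g (f n)) := by rw [hx]
    _ = g n := by rw [h.inv_apply_comm, h.inv_apply_inv]

theorem inv_apply_eq_of_eqOn {f' g' : α → α} (h : IsCliffordInverse f g)
    (h' : IsCliffordInverse f' g') {n : α}
    (hf' : ∀ m ∈ ({n, g (g n), g n, f (g n)} : Set α), f' m = f m) : g' n = g n := by
  have hu : f' (g (g n)) = g n := by rw [hf' _ (by simp), h.apply_inv_inv_apply]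
  have hx : f' (f' (g n)) = f' n := by
    rw [hf' (g n) (by simp), hf' _ (by simp), hf' n (by simp), h.apply_apply_inv_apply]
  exact (h'.eq_inv_apply_of_apply_apply_eq hu hx).symm

end IsCliffordInverse

theorem continuous_of_isCliffordInverse {X α : Type*} [TopologicalSpace X] [TopologicalSpace α]
    [DiscreteTopology α] {F G : X → α → α} (hF : Continuous F)
    (hFG : ∀ x, IsCliffordInverse (F x) (G x)) : Continuous G := by
  refine continuous_pi fun n => IsLocallyConstant.continuous ?_
  have hF_loc (m : α) : IsLocallyConstant (fun x => F x m) :=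
    (IsLocallyConstant.iff_continuous _).2 ((continuous_apply m).comp hF)
  refine (IsLocallyConstant.iff_eventually_eq _).2 fun x₀ => ?_
  have hagree : ∀ᶠ x in 𝓝 x₀, ∀ m ∈ ({n, G x₀ (G x₀ n), G x₀ n, F x₀ (G x₀ n)} : Set α),
      F x m = F x₀ m :=
    (Set.toFinite _).eventually_all.2 fun m _ => (hF_loc m).eventually_eq x₀
  exact hagree.mono fun x hx => (hFG x₀).inv_apply_eq_of_eqOn (hFG x) hx

theorem clifford_subsemigroup_of_NN_inversion_continuous_general
    (S : Set (ℕ → ℕ))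
    (inv : (ℕ → ℕ) → (ℕ → ℕ))
    (hreg : ∀ f ∈ S, f ∘ inv f ∘ f = f ∧ inv f ∘ f ∘ inv f = inv f)
    (hcliff : ∀ f ∈ S, inv f ∘ f = f ∘ inv f) :
    Continuous (fun s : {f : ℕ → ℕ // f ∈ S} => inv s.1) :=
  continuous_of_isCliffordInverse continuous_subtype_val fun s =>
    ⟨(hreg s.1 s.2).1, (hreg s.1 s.2).2, hcliff s.1 s.2⟩

/-- Every Clifford subsemigroup of `ℕ^ℕ` (functions under left-to-right
composition, product topology), endowed with the subspace topology, is a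
topological inverse semigroup: the inversion map is continuous.  Here `inv`
assigns to each element of `S` its (unique) inverse, and `S` is Clifford:
`x x⁻¹ = x⁻¹ x` for all `x ∈ S`. -/
theorem clifford_subsemigroup_of_NN_inversion_continuous
    (S : Set (ℕ → ℕ))
    (hmul : ∀ f ∈ S, ∀ g ∈ S, g ∘ f ∈ S)
    (inv : (ℕ → ℕ) → (ℕ → ℕ))
    (hinvS : ∀ f ∈ S, inv f ∈ S)
    (hreg : ∀ f ∈ S, f ∘ inv f ∘ f = f ∧ inv f ∘ f ∘ inv f = inv f)
    (hcliff : ∀ f ∈ S, inv f ∘ f = f ∘ inv f)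
    (huniq : ∀ f ∈ S, ∀ j ∈ S,
      f ∘ j ∘ f = f → j ∘ f ∘ j = j → j = inv f) :
    Continuous (fun s : {f : ℕ → ℕ // f ∈ S} => inv s.1) :=
  clifford_subsemigroup_of_NN_inversion_continuous_general S inv hreg hcliff
end
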